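/- arXiv:2504.05190 — 3 statements merged into one kernel-verified Lean document; each statement's English description precedes it below -/
import Mathlib

section
/- Let v_i and v_j be two distinct nodes such that parent⁻¹(v_i) = {e_i} and parent⁻¹(v_j) = {e_j} for edges e_i ≠ e_j, such that for every index k one has e_i ∈ P_k if and only if e_j ∈ P_k, and such that Δw(e_i) ≤ Δw(e_j). Let S ⊆ V be any upgrade set with v_i ∈ S and v_j ∉ S, and set S* := (S \ {v_i}) ∪ {v_j}. Then |S*| = |S| and val(S*) ≥ val(S); that is, replacing the upgraded node whose edge has the smaller deviation by the node whose edge has the larger deviation on the same set of root-leaf paths does not decrease the shortest root-leaf distance and does not change the number of upgraded nodes. -/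
/-! Swapping `vi` for `vj` changes only the weights of `ei` (from `u ei` down to `w ei`) and of
`ej` (from `w ej` up to `u ej`). Every root-leaf path contains both edges or neither, so each path
length changes by `0` or by `Δw(ej) - Δw(ei) ≥ 0`, and so does their minimum. -/

/-- The shortest root-leaf distance of a node-upgrade instance after upgrading
the node set `S`: the minimum over the paths `P k` of the sum of the upgraded
weights, where an edge `e` has weight `u e` if its forward node `parent e`
is upgraded and `w e` otherwise. -/
noncomputable def sval {V E : Type*} [DecidableEq V] {l : ℕ}
    (parent : E → V) (w u : E → ℝ) (P : Fin l → Finset E) (hl : 0 < l)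
    (S : Finset V) : ℝ :=
  Finset.univ.inf' (Finset.univ_nonempty_iff.mpr ⟨⟨0, hl⟩⟩)
    fun k => ∑ e ∈ P k, if parent e ∈ S then u e else w e

namespace Finset

theorem card_sdiff_singleton_union_singleton {α : Type*} [DecidableEq α] {s : Finset α}
    {a b : α} (ha : a ∈ s) (hb : b ∉ s) : (s \ {a} ∪ {b}).card = s.card := by
  have hb' : b ∉ s \ {a} := fun h => hb (mem_sdiff.mp h).1
  rw [union_singleton, card_insert_of_notMem hb', sdiff_singleton_eq_erase,
    card_erase_add_one ha]

end Finset

section NodeSwap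

variable {V E : Type*} [DecidableEq V] (parent : E → V) (w u : E → ℝ)
  {vi vj : V} {ei ej : E} {S : Finset V}

theorem sval_le_sval_of_forall_sum_le {l : ℕ} (P : Fin l → Finset E) (hl : 0 < l)
    {S T : Finset V}
    (h : ∀ k, ∑ e ∈ P k, (if parent e ∈ S then u e else w e)
      ≤ ∑ e ∈ P k, if parent e ∈ T then u e else w e) :
    sval parent w u P hl S ≤ sval parent w u P hl T :=
  Finset.le_inf' _ _ fun k _ => (Finset.inf'_le _ (Finset.mem_univ k)).trans (h k)

theorem upgradedWeight_swap [DecidableEq E] (hpi : ∀ e, parent e = vi ↔ e = ei)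
    (hpj : ∀ e, parent e = vj ↔ e = ej) (hiS : vi ∈ S) (hjS : vj ∉ S) (e : E) :
    (if parent e ∈ S \ {vi} ∪ {vj} then u e else w e) =
      (if parent e ∈ S then u e else w e) + (if e = ej then u ej - w ej else 0)
        - (if e = ei then u ei - w ei else 0) := by
  have hv : vi ≠ vj := ne_of_mem_of_not_mem hiS hjS
  by_cases hei : e = ei
  · subst hei
    have hej : e ≠ ej := fun h => hv (((hpi e).mpr rfl).symm.trans ((hpj e).mpr h))
    simp [(hpi e).mpr rfl, hiS, hv, hej]
  by_cases hej : e = ej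
  · subst hej
    simp [(hpj e).mpr rfl, hjS, hei]
  have hi : parent e ≠ vi := fun h => hei ((hpi e).mp h)
  have hj : parent e ≠ vj := fun h => hej ((hpj e).mp h)
  simp [hi, hj, hei, hej]

theorem sum_upgradedWeight_swap [DecidableEq E] (hpi : ∀ e, parent e = vi ↔ e = ei)
    (hpj : ∀ e, parent e = vj ↔ e = ej) (hiS : vi ∈ S) (hjS : vj ∉ S) (p : Finset E) :
    ∑ e ∈ p, (if parent e ∈ S \ {vi} ∪ {vj} then u e else w e) =
      ∑ e ∈ p, (if parent e ∈ S then u e else w e) + (if ej ∈ p then u ej - w ej else 0)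
        - (if ei ∈ p then u ei - w ei else 0) := by
  simp only [upgradedWeight_swap parent w u hpi hpj hiS hjS, Finset.sum_sub_distrib,
    Finset.sum_add_distrib, Finset.sum_ite_eq']

end NodeSwap

theorem stmt0_general {V E : Type*} [DecidableEq V] [DecidableEq E]
    (parent : E → V) (w u : E → ℝ)
    {l : ℕ} (hl : 0 < l) (P : Fin l → Finset E)
    (vi vj : V) (ei ej : E)
    (hpi : ∀ e, parent e = vi ↔ e = ei)
    (hpj : ∀ e, parent e = vj ↔ e = ej)
    (hP : ∀ k : Fin l, ei ∈ P k ↔ ej ∈ P k)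
    (hdev : u ei - w ei ≤ u ej - w ej)
    (S : Finset V) (hiS : vi ∈ S) (hjS : vj ∉ S) :
    ((S \ {vi}) ∪ {vj}).card = S.card ∧
      sval parent w u P hl S ≤ sval parent w u P hl ((S \ {vi}) ∪ {vj}) := by
  refine ⟨Finset.card_sdiff_singleton_union_singleton hiS hjS,
    sval_le_sval_of_forall_sum_le parent w u P hl fun k => ?_⟩
  rw [sum_upgradedWeight_swap parent w u hpi hpj hiS hjS]
  by_cases hk : ei ∈ P k
  · simp only [hk, (hP k).mp hk, if_true]
    linarith
  · simp only [hk, mt (hP k).mpr hk, if_false]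
    linarith

theorem stmt0 {V E : Type*} [Fintype V] [DecidableEq V] [Fintype E] [DecidableEq E]
    (parent : E → V) (w u : E → ℝ) (hwu : ∀ e, w e ≤ u e)
    {l : ℕ} (hl : 0 < l) (P : Fin l → Finset E)
    (vi vj : V) (hv : vi ≠ vj) (ei ej : E) (he : ei ≠ ej)
    (hpi : ∀ e, parent e = vi ↔ e = ei)
    (hpj : ∀ e, parent e = vj ↔ e = ej)
    (hP : ∀ k : Fin l, ei ∈ P k ↔ ej ∈ P k)
    (hdev : u ei - w ei ≤ u ej - w ej)
    (S : Finset V) (hiS : vi ∈ S) (hjS : vj ∉ S) :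
    ((S \ {vi}) ∪ {vj}).card = S.card ∧
      sval parent w u P hl S ≤ sval parent w u P hl ((S \ {vi}) ∪ {vj}) :=
  stmt0_general parent w u hl P vi vj ei ej hpi hpj hP hdev S hiS hjS
end

section
/- For every budget K ∈ ℕ there exists an upgrade set S that is optimal for budget K and is sorted in the following sense: for every two distinct nodes v_i and v_j with parent⁻¹(v_i) = {e_i} and parent⁻¹(v_j) = {e_j} for edges e_i ≠ e_j, such that for every index k one has e_i ∈ P_k if and only if e_j ∈ P_k, and such that Δw(e_i) < Δw(e_j), if v_i ∈ S then v_j ∈ S. (In particular, on each chain the upgraded degree-two nodes may be assumed to be those whose adjacent edges have the largest deviations.) -/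
/-!
Among the sets of size at most `K`, take one maximising the shortest root-leaf distance
and, among those, maximising the total upgraded weight of all edges. If such a set `S`
contained `vi` but not `vj`, replacing `vi` by `vj` would not shorten any root-leaf path
(both nodes lie on the same paths and upgrading `vj` gains more), but would strictly
increase the total upgraded weight.
-/

theorem Finset.exists_max_image_lex {α β γ : Type*} [LinearOrder β] [LinearOrder γ]
    (s : Finset α) (hs : s.Nonempty) (f : α → β) (g : α → γ) :
    ∃ x ∈ s, ∀ y ∈ s, f y ≤ f x ∧ (f y = f x → g y ≤ g x) := by
  obtain ⟨x, hx, hmax⟩ := s.exists_max_image (fun a => toLex (f a, g a)) hs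
  refine ⟨x, hx, fun y hy => ?_⟩
  rcases Prod.Lex.toLex_le_toLex.mp (hmax y hy) with hlt | ⟨heq, hle⟩
  · exact ⟨hlt.le, fun heq => absurd heq hlt.ne⟩
  · exact ⟨heq.le, fun _ => hle⟩

section NodeUpgrade

variable {V E : Type*} [DecidableEq V] (parent : E → V) (w u : E → ℝ)

def upgradedLength (S : Finset V) (p : Finset E) : ℝ :=
  ∑ e ∈ p, if parent e ∈ S then u e else w e

theorem upgradedLength_insert [DecidableEq E] {S : Finset V} {v : V} {e₀ : E} (hv : v ∉ S)
    (hparent : ∀ e, parent e = v ↔ e = e₀) (p : Finset E) :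
    upgradedLength parent w u (insert v S) p =
      upgradedLength parent w u S p + if e₀ ∈ p then u e₀ - w e₀ else 0 := by
  have hpointwise : ∀ e, (if parent e ∈ insert v S then u e else w e) =
      (if parent e ∈ S then u e else w e) + if e₀ = e then u e₀ - w e₀ else 0 := by
    intro e
    by_cases he : e = e₀
    · subst he
      simp [(hparent e).mpr rfl, hv]
    · have hne : parent e ≠ v := fun h => he ((hparent e).mp h)
      simp [Finset.mem_insert, hne, Ne.symm he]
  simp only [upgradedLength, hpointwise, Finset.sum_add_distrib, Finset.sum_ite_eq]

theorem upgradedLength_insert_le_insert [DecidableEq E] {S : Finset V} {vi vj : V} {ei ej : E}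
    (hvi : vi ∉ S) (hvj : vj ∉ S) (hparent_i : ∀ e, parent e = vi ↔ e = ei)
    (hparent_j : ∀ e, parent e = vj ↔ e = ej) (hΔ : u ei - w ei ≤ u ej - w ej)
    {p : Finset E} (hp : ei ∈ p ↔ ej ∈ p) :
    upgradedLength parent w u (insert vi S) p ≤ upgradedLength parent w u (insert vj S) p := by
  rw [upgradedLength_insert parent w u hvi hparent_i,
    upgradedLength_insert parent w u hvj hparent_j]
  by_cases hi : ei ∈ p
  · simp [hi, hp.mp hi, hΔ]
  · simp [hi, mt hp.mpr hi]

theorem sval_le_sval {l : ℕ} (P : Fin l → Finset E) (hl : 0 < l) {S S' : Finset V}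
    (h : ∀ k, upgradedLength parent w u S (P k) ≤ upgradedLength parent w u S' (P k)) :
    sval parent w u P hl S ≤ sval parent w u P hl S' :=
  Finset.le_inf' _ _ fun k _ => (Finset.inf'_le _ (Finset.mem_univ k)).trans (h k)

end NodeUpgrade

theorem stmt2_general {V E : Type*} [Fintype V] [DecidableEq V] [Fintype E] [DecidableEq E]
    (parent : E → V) (w u : E → ℝ)
    {l : ℕ} (hl : 0 < l) (P : Fin l → Finset E) (K : ℕ) :
    ∃ S : Finset V,
      -- `S` is optimal for budget `K`
      (S.card ≤ K ∧ ∀ S' : Finset V, S'.card ≤ K →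
        sval parent w u P hl S' ≤ sval parent w u P hl S) ∧
      -- `S` is sorted: on any pair of degree-two nodes lying on exactly the
      -- same root-leaf paths, whose adjacent edges have strictly comparable
      -- deviations, the node with the larger deviation is preferred.
      (∀ (vi vj : V) (ei ej : E), vi ≠ vj → ei ≠ ej →
        (∀ e, parent e = vi ↔ e = ei) →
        (∀ e, parent e = vj ↔ e = ej) →
        (∀ k : Fin l, ei ∈ P k ↔ ej ∈ P k) →
        u ei - w ei < u ej - w ej →
        vi ∈ S → vj ∈ S) := by
  obtain ⟨S, hS, hmax⟩ :=
    (Finset.univ.filter fun S : Finset V => S.card ≤ K).exists_max_image_lex ⟨∅, by simp⟩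
      (sval parent w u P hl) (fun S => upgradedLength parent w u S Finset.univ)
  simp only [Finset.mem_filter, Finset.mem_univ, true_and] at hS hmax
  refine ⟨S, ⟨hS, fun S' hS' => (hmax S' hS').1⟩, ?_⟩
  intro vi vj ei ej _ _ hparent_i hparent_j hP hΔ hviS
  by_contra hvjS
  set T := S.erase vi
  have hvjT : vj ∉ T := fun h => hvjS (Finset.mem_of_mem_erase h)
  have hST : S = insert vi T := (Finset.insert_erase hviS).symm
  have hcard : (insert vj T).card ≤ K := by
    have := Finset.card_insert_le vj T
    have : T.card + 1 = S.card := Finset.card_erase_add_one hviS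
    omega
  have hsval : sval parent w u P hl S ≤ sval parent w u P hl (insert vj T) := by
    rw [hST]
    exact sval_le_sval parent w u P hl fun k => upgradedLength_insert_le_insert parent w u
      (Finset.notMem_erase vi S) hvjT hparent_i hparent_j hΔ.le (hP k)
  have htotal := (hmax _ hcard).2 (le_antisymm (hmax _ hcard).1 hsval)
  rw [hST, upgradedLength_insert parent w u hvjT hparent_j,
    upgradedLength_insert parent w u (Finset.notMem_erase vi S) hparent_i] at htotal
  simp only [Finset.mem_univ, if_true] at htotal
  linarith

theorem stmt2 {V E : Type*} [Fintype V] [DecidableEq V] [Fintype E] [DecidableEq E]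
    (parent : E → V) (w u : E → ℝ) (hwu : ∀ e, w e ≤ u e)
    {l : ℕ} (hl : 0 < l) (P : Fin l → Finset E) (K : ℕ) :
    ∃ S : Finset V,
      -- `S` is optimal for budget `K`
      (S.card ≤ K ∧ ∀ S' : Finset V, S'.card ≤ K →
        sval parent w u P hl S' ≤ sval parent w u P hl S) ∧
      -- `S` is sorted: on any pair of degree-two nodes lying on exactly the
      -- same root-leaf paths, whose adjacent edges have strictly comparable
      -- deviations, the node with the larger deviation is preferred.
      (∀ (vi vj : V) (ei ej : E), vi ≠ vj → ei ≠ ej →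
        (∀ e, parent e = vi ↔ e = ei) →
        (∀ e, parent e = vj ↔ e = ej) →
        (∀ k : Fin l, ei ∈ P k ↔ ej ∈ P k) →
        u ei - w ei < u ej - w ej →
        vi ∈ S → vj ∈ S) :=
  stmt2_general parent w u hl P K
end

section
/- (Parallel budget decomposition with a shared root node.) Let V₁ and V₂ be finite sets with V₁ ∩ V₂ = {v}, let α be a real-valued function on the subsets of V₁, let β be a real-valued function on the subsets of V₂, and let k ∈ ℕ with k ≥ 1. For ε ∈ {0,1} and m ∈ ℕ with m ≥ ε, define fα(ε, m) := max{α(S₁) : S₁ ⊆ V₁, |S₁| ≤ m, and v ∈ S₁ if and only if ε = 1}, and define fβ(ε, m) analogously on subsets of V₂. Then max{min(α(S ∩ V₁), β(S ∩ V₂)) : S ⊆ V₁ ∪ V₂, |S| ≤ k} = max{min(fα(ε, k₁), fβ(ε, k₂)) : ε ∈ {0,1}, k₁, k₂ ∈ ℕ, k₁ ≥ ε, k₂ ≥ ε, k₁ + k₂ = k + ε}. That is, the budget split must account once, via the indicator ε, for whether the shared node v is upgraded. -/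
lemma exists_isGreatest_image {σ : Type*} (s : Finset σ) (hs : s.Nonempty) (f : σ → ℝ) :
    ∃ g, IsGreatest {x : ℝ | ∃ a ∈ s, x = f a} g := by
  obtain ⟨a, ha, hmax⟩ := s.exists_max_image f hs
  exact ⟨f a, ⟨a, ha, rfl⟩, by rintro x ⟨b, hb, rfl⟩; exact hmax b hb⟩

lemma fexists {γ : Type*} [DecidableEq γ] (V : Finset γ) (v : γ) (hvV : v ∈ V)
    (α : Finset γ → ℝ) (ε m : ℕ) (hε : ε ≤ 1) (hεm : ε ≤ m) :
    ∃ a, IsGreatest {y : ℝ | ∃ S ⊆ V, S.card ≤ m ∧ (v ∈ S ↔ ε = 1) ∧ y = α S} a := by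
  obtain ⟨g, hg⟩ := exists_isGreatest_image
    (V.powerset.filter (fun S => S.card ≤ m ∧ (v ∈ S ↔ ε = 1)))
    (by
      interval_cases ε
      · exact ⟨∅, by simp⟩
      · exact ⟨{v}, by simp [hvV, hεm]⟩) α
  refine ⟨g, ?_⟩
  convert hg using 2
  ext x
  simp only [Set.mem_setOf_eq, Finset.mem_filter, Finset.mem_powerset]
  constructor
  · rintro ⟨S, h1, h2, h3, h4⟩; exact ⟨S, ⟨h1, h2, h3⟩, h4⟩
  · rintro ⟨S, ⟨h1, h2, h3⟩, h4⟩; exact ⟨S, h1, h2, h3, h4⟩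

lemma union_props {γ : Type*} [DecidableEq γ] (V₁ V₂ : Finset γ) (v : γ)
    (hv : V₁ ∩ V₂ = {v}) (ε k₁ k₂ k : ℕ) (hε : ε ≤ 1) (hsum : k₁ + k₂ = k + ε)
    (T₁ T₂ : Finset γ) (h1 : T₁ ⊆ V₁) (h2 : T₂ ⊆ V₂)
    (hc1 : T₁.card ≤ k₁) (hc2 : T₂.card ≤ k₂)
    (hv1 : v ∈ T₁ ↔ ε = 1) (hv2 : v ∈ T₂ ↔ ε = 1) :
    T₁ ∪ T₂ ⊆ V₁ ∪ V₂ ∧ (T₁ ∪ T₂).card ≤ k ∧ (T₁ ∪ T₂) ∩ V₁ = T₁ ∧ (T₁ ∪ T₂) ∩ V₂ = T₂ := by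
  have hεcard : ε ≤ (T₁ ∩ T₂).card := by
    interval_cases ε
    · exact Nat.zero_le _
    · exact Finset.one_le_card.mpr ⟨v, Finset.mem_inter.mpr ⟨hv1.mpr rfl, hv2.mpr rfl⟩⟩
  refine ⟨Finset.union_subset_union h1 h2, ?_, ?_, ?_⟩
  · have hcu : (T₁ ∪ T₂).card + (T₁ ∩ T₂).card = T₁.card + T₂.card :=
      Finset.card_union_add_card_inter T₁ T₂
    omega
  · have h21 : T₂ ∩ V₁ ⊆ T₁ := by
      intro x hx
      have hx' : x ∈ V₂ ∩ V₁ := Finset.mem_inter.mpr ⟨h2 (Finset.mem_inter.mp hx).1,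
        (Finset.mem_inter.mp hx).2⟩
      rw [Finset.inter_comm, hv, Finset.mem_singleton] at hx'
      subst hx'
      exact hv1.mpr (hv2.mp (Finset.mem_inter.mp hx).1)
    rw [Finset.union_inter_distrib_right, Finset.inter_eq_left.mpr h1,
      Finset.union_eq_left.mpr h21]
  · have h12 : T₁ ∩ V₂ ⊆ T₂ := by
      intro x hx
      have hx' : x ∈ V₁ ∩ V₂ := Finset.mem_inter.mpr ⟨h1 (Finset.mem_inter.mp hx).1,
        (Finset.mem_inter.mp hx).2⟩
      rw [hv, Finset.mem_singleton] at hx'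
      subst hx'
      exact hv2.mpr (hv1.mp (Finset.mem_inter.mp hx).1)
    rw [Finset.union_inter_distrib_right, Finset.inter_eq_left.mpr h2,
      Finset.union_eq_right.mpr h12]

theorem stmt7 {γ : Type*} [DecidableEq γ] (V₁ V₂ : Finset γ) (v : γ)
    (hv : V₁ ∩ V₂ = {v}) (α β : Finset γ → ℝ) (k : ℕ) (hk : 1 ≤ k) :
    ∃ g : ℝ,
      -- g is the maximum of min(α(S ∩ V₁), β(S ∩ V₂)) over S ⊆ V₁ ∪ V₂ with |S| ≤ k
      IsGreatest {x : ℝ | ∃ S ⊆ V₁ ∪ V₂, S.card ≤ k ∧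
        x = min (α (S ∩ V₁)) (β (S ∩ V₂))} g ∧
      -- and g is the maximum of min(fα(ε,k₁), fβ(ε,k₂)) over ε ∈ {0,1} and
      -- splits k₁ + k₂ = k + ε with k₁ ≥ ε, k₂ ≥ ε, where fα(ε,k₁) is the
      -- maximum of α over S₁ ⊆ V₁ with |S₁| ≤ k₁ containing v iff ε = 1,
      -- and similarly for fβ(ε,k₂) on V₂
      IsGreatest {x : ℝ | ∃ ε k₁ k₂ : ℕ, ε ≤ 1 ∧ ε ≤ k₁ ∧ ε ≤ k₂ ∧
        k₁ + k₂ = k + ε ∧ ∃ a b : ℝ,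
        IsGreatest {y : ℝ | ∃ S₁ ⊆ V₁, S₁.card ≤ k₁ ∧ (v ∈ S₁ ↔ ε = 1) ∧ y = α S₁} a ∧
        IsGreatest {y : ℝ | ∃ S₂ ⊆ V₂, S₂.card ≤ k₂ ∧ (v ∈ S₂ ↔ ε = 1) ∧ y = β S₂} b ∧
        x = min a b} g := by
  have hvv : v ∈ V₁ ∩ V₂ := by rw [hv]; exact Finset.mem_singleton_self v
  have hvV₁ : v ∈ V₁ := (Finset.mem_inter.mp hvv).1
  have hvV₂ : v ∈ V₂ := (Finset.mem_inter.mp hvv).2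
  obtain ⟨S₀, hS₀, hmax⟩ := Finset.exists_max_image
    ((V₁ ∪ V₂).powerset.filter (fun S => S.card ≤ k))
    (fun S => min (α (S ∩ V₁)) (β (S ∩ V₂)))
    ⟨∅, Finset.mem_filter.mpr ⟨Finset.mem_powerset.mpr (Finset.empty_subset _), by simp⟩⟩
  rw [Finset.mem_filter, Finset.mem_powerset] at hS₀
  obtain ⟨hS₀sub, hS₀card⟩ := hS₀
  set g : ℝ := min (α (S₀ ∩ V₁)) (β (S₀ ∩ V₂)) with hg
  -- g is an upper bound of the first set
  have hubA : ∀ x ∈ {x : ℝ | ∃ S ⊆ V₁ ∪ V₂, S.card ≤ k ∧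
      x = min (α (S ∩ V₁)) (β (S ∩ V₂))}, x ≤ g := by
    rintro x ⟨S, hsub, hcard, rfl⟩
    exact hmax S (Finset.mem_filter.mpr ⟨Finset.mem_powerset.mpr hsub, hcard⟩)
  -- g is an upper bound of the second set
  have hubB : ∀ x ∈ {x : ℝ | ∃ ε k₁ k₂ : ℕ, ε ≤ 1 ∧ ε ≤ k₁ ∧ ε ≤ k₂ ∧
      k₁ + k₂ = k + ε ∧ ∃ a b : ℝ,
      IsGreatest {y : ℝ | ∃ S₁ ⊆ V₁, S₁.card ≤ k₁ ∧ (v ∈ S₁ ↔ ε = 1) ∧ y = α S₁} a ∧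
      IsGreatest {y : ℝ | ∃ S₂ ⊆ V₂, S₂.card ≤ k₂ ∧ (v ∈ S₂ ↔ ε = 1) ∧ y = β S₂} b ∧
      x = min a b}, x ≤ g := by
    rintro x ⟨ε, k₁, k₂, hε, hεk₁, hεk₂, hsum, a, b, ha, hb, rfl⟩
    obtain ⟨T₁, hT₁V, hT₁c, hT₁v, haT⟩ := ha.1
    obtain ⟨T₂, hT₂V, hT₂c, hT₂v, hbT⟩ := hb.1
    obtain ⟨hsub, hcard, hi1, hi2⟩ := union_props V₁ V₂ v hv ε k₁ k₂ k hε hsum T₁ T₂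
      hT₁V hT₂V hT₁c hT₂c hT₁v hT₂v
    have : min a b = min (α ((T₁ ∪ T₂) ∩ V₁)) (β ((T₁ ∪ T₂) ∩ V₂)) := by
      rw [hi1, hi2, haT, hbT]
    rw [this]
    exact hubA _ ⟨T₁ ∪ T₂, hsub, hcard, rfl⟩
  refine ⟨g, ⟨⟨S₀, hS₀sub, hS₀card, rfl⟩, hubA⟩, ?_, hubB⟩
  -- g belongs to the second set
  obtain ⟨ε, hεiff, hε1⟩ : ∃ ε : ℕ, (ε = 1 ↔ v ∈ S₀) ∧ ε ≤ 1 := by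
    by_cases h : v ∈ S₀
    · exact ⟨1, by simp [h], le_refl 1⟩
    · exact ⟨0, by simp [h], by omega⟩
  set S₁ : Finset γ := S₀ ∩ V₁ with hS₁
  set S₂ : Finset γ := S₀ ∩ V₂ with hS₂
  have hvS₁ : v ∈ S₁ ↔ ε = 1 := by
    rw [hS₁, Finset.mem_inter, hεiff]
    exact ⟨fun h => h.1, fun h => ⟨h, hvV₁⟩⟩
  have hvS₂ : v ∈ S₂ ↔ ε = 1 := by
    rw [hS₂, Finset.mem_inter, hεiff]
    exact ⟨fun h => h.1, fun h => ⟨h, hvV₂⟩⟩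
  have hunion : S₁ ∪ S₂ = S₀ := by
    rw [hS₁, hS₂, ← Finset.inter_union_distrib_left, Finset.inter_eq_left.mpr hS₀sub]
  have hinter : (S₁ ∩ S₂).card = ε := by
    have heq : S₁ ∩ S₂ = S₀ ∩ {v} := by
      rw [hS₁, hS₂, ← hv]
      ext x
      simp only [Finset.mem_inter]
      tauto
    rw [heq]
    rcases Nat.le_one_iff_eq_zero_or_eq_one.mp hε1 with h0 | h1
    · rw [h0, Finset.inter_singleton_of_notMem (fun h => by simp [hεiff.mpr h] at h0)]
      simp
    · rw [h1, Finset.inter_singleton_of_mem (hεiff.mp h1)]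
      simp
  have hsumc : S₁.card + S₂.card = S₀.card + ε := by
    have := Finset.card_union_add_card_inter S₁ S₂
    rw [hunion, hinter] at this
    omega
  have hεS₁ : ε ≤ S₁.card := by
    rcases Nat.le_one_iff_eq_zero_or_eq_one.mp hε1 with h0 | h1
    · omega
    · rw [h1]; exact Finset.one_le_card.mpr ⟨v, hvS₁.mpr h1⟩
  have hεS₂ : ε ≤ S₂.card := by
    rcases Nat.le_one_iff_eq_zero_or_eq_one.mp hε1 with h0 | h1
    · omega
    · rw [h1]; exact Finset.one_le_card.mpr ⟨v, hvS₂.mpr h1⟩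
  set k₁ : ℕ := S₁.card with hk₁
  set k₂ : ℕ := k + ε - k₁ with hk₂
  have hεk₁ : ε ≤ k₁ := hεS₁
  have hεk₂ : ε ≤ k₂ := by omega
  have hsum : k₁ + k₂ = k + ε := by omega
  have hS₂k₂ : S₂.card ≤ k₂ := by omega
  obtain ⟨a, ha⟩ := fexists V₁ v hvV₁ α ε k₁ hε1 hεk₁
  obtain ⟨b, hb⟩ := fexists V₂ v hvV₂ β ε k₂ hε1 hεk₂
  have hga : α S₁ ≤ a := ha.2 ⟨S₁, Finset.inter_subset_right, le_refl k₁, hvS₁, rfl⟩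
  have hgb : β S₂ ≤ b := hb.2 ⟨S₂, Finset.inter_subset_right, hS₂k₂, hvS₂, rfl⟩
  have hle : g ≤ min a b := le_min (le_trans (min_le_left _ _) hga)
    (le_trans (min_le_right _ _) hgb)
  have hge : min a b ≤ g :=
    hubB _ ⟨ε, k₁, k₂, hε1, hεk₁, hεk₂, hsum, a, b, ha, hb, rfl⟩
  exact ⟨ε, k₁, k₂, hε1, hεk₁, hεk₂, hsum, a, b, ha, hb, le_antisymm hle hge⟩
end
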